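/- For all integers n ≥ 2 and k ≥ 1, q_{Gr_ℝ(k,•)}(n) = 1 + max(k, q(n)). -/

import Mathlib

open MvPolynomial Matrix

noncomputable section

/-- The unit sphere `S^n ⊂ ℝ^{n+1}`, as the set of points with sum of squared coordinates 1. -/
def sphereSet (n : ℕ) : Set (Fin (n + 1) → ℝ) := {x | ∑ i, x i ^ 2 = 1}

/-- Each component of `F` is (the evaluation of) a real polynomial. -/
def IsPolyFun {n m : ℕ} (F : (Fin n → ℝ) → (Fin m → ℝ)) : Prop :=
  ∀ j, ∃ p : MvPolynomial (Fin n) ℝ, ∀ x, F x j = eval x p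

/-- A polynomial map `S^n → S^r`: a polynomial map `ℝ^{n+1} → ℝ^{r+1}` sending the sphere to
the sphere. -/
def IsSpherePolyMap (n r : ℕ) (F : (Fin (n + 1) → ℝ) → (Fin (r + 1) → ℝ)) : Prop :=
  IsPolyFun F ∧ ∀ x ∈ sphereSet n, F x ∈ sphereSet r

/-- `F` is non-constant on the set `s`. -/
def NonconstOn {α β : Type*} (s : Set α) (F : α → β) : Prop :=
  ∃ x ∈ s, ∃ y ∈ s, F x ≠ F y

/-- There exists a polynomial map `S^n → S^r` which is non-constant on `S^n`. -/
def ExistsNonconstPolyMap (n r : ℕ) : Prop :=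
  ∃ F : (Fin (n + 1) → ℝ) → (Fin (r + 1) → ℝ),
    IsSpherePolyMap n r F ∧ NonconstOn (sphereSet n) F

/-- `q n` is the least `r ≥ 1` for which there exists a non-constant polynomial map
`S^n → S^r`. -/
def q (n : ℕ) : ℕ := sInf {r | 1 ≤ r ∧ ExistsNonconstPolyMap n r}
/-- There exists a non-constant polynomial map `S^n → Gr_ℝ(k,r)`, the Grassmannian of
`k`-planes in `ℝ^r` being identified with the set of symmetric rank-`k` orthogonal
projection matrices. -/
def ExistsNonconstPolyMapGrR (n k r : ℕ) : Prop :=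
  ∃ P : (Fin (n + 1) → ℝ) → Matrix (Fin r) (Fin r) ℝ,
    (∀ i j : Fin r, ∃ p : MvPolynomial (Fin (n + 1)) ℝ, ∀ v, P v i j = eval v p) ∧
    (∀ v ∈ sphereSet n, (P v)ᵀ = P v ∧ P v * P v = P v ∧ (P v).rank = k) ∧
    NonconstOn (sphereSet n) P

/-- `q_{Gr_ℝ(k,•)}(n)`: the least `r ≥ k` admitting a non-constant polynomial map
`S^n → Gr_ℝ(k,r)`. -/
def qGrR (k n : ℕ) : ℕ := sInf {r | k ≤ r ∧ ExistsNonconstPolyMapGrR n k r}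

/-!
Lower bound: a rank-`r` orthogonal projection of `ℝ^r` is the identity, so `k < r`; and if `P` is
an orthogonal projection then `2P - 1` is a symmetric orthogonal matrix, so its columns are
polynomial maps `S^n → S^{r-1}`, one of them non-constant when `P` is; hence `q(n) ≤ r - 1`.

Upper bound: take a non-constant polynomial `g : S^n → S^m` with `m = max(k, q(n))`. As `S^n` is
connected, `g` does not only take the values `±g(a)`, so `g(a)g(a)ᵀ ≠ g(b)g(b)ᵀ` for some `a, b`.
For `k = 1`, `x ↦ g(x)g(x)ᵀ` already maps to `Gr_ℝ(1, m+1)`. For `k ≥ 2`, conjugate a fixed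
rank-`k` projection `P₀` by the Householder reflection `H(g(x))`: a trace count shows that
`H(g(b))H(g(a))` is not scalar (as `m + 1 ≠ 2`), and a non-scalar matrix is non-diagonal in some
orthonormal basis, so it fails to commute with a rank-`k` coordinate projection `P₀` of that basis.
-/

section Grassmannian

variable {ι : Type*} [Fintype ι]

theorem Matrix.rank_eq_trace_of_isIdempotentElem [DecidableEq ι] {K : Type*} [Field K]
    {P : Matrix ι ι K} (hP : IsIdempotentElem P) : (P.rank : K) = P.trace := by
  have h : IsIdempotentElem (toLin' P) := hP.map toLinAlgEquiv'
  rw [Matrix.rank, ← toLin'_apply', ← trace_toLin'_eq,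
    ((LinearMap.isProj_range_iff_isIdempotentElem _).mpr h).trace]

def InGrassmannian (k : ℕ) (P : Matrix ι ι ℝ) : Prop :=
  Pᵀ = P ∧ P * P = P ∧ P.rank = k

variable [DecidableEq ι] {k : ℕ} {P : Matrix ι ι ℝ}

theorem InGrassmannian.trace_eq (hP : InGrassmannian k P) : P.trace = k := by
  rw [← rank_eq_trace_of_isIdempotentElem hP.2.1, hP.2.2]

theorem InGrassmannian.of_trace (hsymm : Pᵀ = P) (hidem : P * P = P) (htrace : P.trace = k) :
    InGrassmannian k P :=
  ⟨hsymm, hidem, by exact_mod_cast (rank_eq_trace_of_isIdempotentElem hidem).trans htrace⟩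

theorem InGrassmannian.conj {O : Matrix ι ι ℝ} (hO : Oᵀ * O = 1) (hP : InGrassmannian k P) :
    InGrassmannian k (O * P * Oᵀ) := by
  refine .of_trace ?_ ?_ ?_
  · rw [transpose_mul, transpose_mul, transpose_transpose, hP.1, mul_assoc]
  · calc O * P * Oᵀ * (O * P * Oᵀ) = O * (P * (Oᵀ * O) * P) * Oᵀ := by simp only [mul_assoc]
      _ = O * P * Oᵀ := by rw [hO, mul_one, hP.2.1, mul_assoc]
  · rw [trace_mul_cycle, hO, one_mul, hP.trace_eq]

theorem inGrassmannian_diagonal (T : Finset ι) :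
    InGrassmannian T.card (diagonal fun i => if i ∈ T then (1 : ℝ) else 0) := by
  refine .of_trace (diagonal_transpose _) ?_ ?_
  · rw [diagonal_mul_diagonal]
    congr 1
    ext i
    split_ifs <;> norm_num
  · simp [trace_diagonal]

theorem inGrassmannian_vecMulVec {u : ι → ℝ} (hu : u ⬝ᵥ u = 1) :
    InGrassmannian 1 (vecMulVec u u) :=
  .of_trace (transpose_vecMulVec u u) (by rw [vecMulVec_mul_vecMulVec, hu, one_smul])
    (by rw [trace_vecMulVec, hu, Nat.cast_one])

theorem InGrassmannian.eq_one (hP : InGrassmannian (Fintype.card ι) P) : P = 1 := by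
  have h : IsIdempotentElem (toLin' (1 - P)) := (IsIdempotentElem.one_sub hP.2.1).map toLinAlgEquiv'
  have h0 := LinearMap.IsIdempotentElem.eq_zero_of_trace_eq_zero h (by
    rw [trace_toLin'_eq, trace_sub, trace_one, hP.trace_eq, sub_self])
  rw [LinearEquiv.map_eq_zero_iff, sub_eq_zero] at h0
  exact h0.symm

end Grassmannian

section Orthogonal

variable {ι : Type*} [Fintype ι] [DecidableEq ι]

theorem exists_orthogonal_smul_col_eq {v : ι → ℝ} (hv : v ≠ 0) (i₀ : ι) :
    ∃ B : Matrix ι ι ℝ, Bᵀ * B = 1 ∧ ∃ a : ℝ, a • B.col i₀ = v := by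
  set x : EuclideanSpace ℝ ι := WithLp.toLp 2 v
  have hx : x ≠ 0 := by simpa [x] using hv
  have hon : Orthonormal ℝ (({i₀} : Set ι).domRestrict fun _ => ‖x‖⁻¹ • x) := by
    rw [orthonormal_iff_ite]
    rintro ⟨i, rfl⟩ ⟨j, rfl⟩
    simp [norm_smul, hx]
  obtain ⟨b, hb⟩ := hon.exists_orthonormalBasis_extension_of_card_eq
    (finrank_euclideanSpace (𝕜 := ℝ) (ι := ι))
  refine ⟨(EuclideanSpace.basisFun ι ℝ).toBasis.toMatrix b, ?_, ‖x‖, funext fun t => ?_⟩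
  · simpa using (EuclideanSpace.basisFun ι ℝ).toMatrix_orthonormalBasis_conjTranspose_mul_self b
  · rw [Pi.smul_apply, col_apply, Module.Basis.toMatrix_apply, hb i₀ rfl]
    simp [x, norm_ne_zero_iff.mpr hx]

theorem exists_orthogonal_not_isDiag {M : Matrix ι ι ℝ} (hM : ∀ c : ℝ, M ≠ c • 1) :
    ∃ B : Matrix ι ι ℝ, Bᵀ * B = 1 ∧ ¬ (Bᵀ * M * B).IsDiag := by
  by_contra! hdiag
  have heigen : ∀ v : ι → ℝ, v ≠ 0 → ∃ c : ℝ, M *ᵥ v = c • v := by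
    intro v hv
    obtain ⟨i₀⟩ : Nonempty ι := by
      by_contra! h
      exact hv (Subsingleton.elim _ _)
    obtain ⟨B, hB, a, rfl⟩ := exists_orthogonal_smul_col_eq hv i₀
    have hMB : M * B = B * diagonal (Bᵀ * M * B).diag := by
      rw [(hdiag B hB).diagonal_diag, ← mul_assoc, ← mul_assoc, mul_eq_one_comm.mp hB, one_mul]
    refine ⟨(Bᵀ * M * B) i₀ i₀, ?_⟩
    rw [← mulVec_single_one, ← mulVec_smul, mulVec_mulVec, hMB, ← mulVec_mulVec,
      ← Pi.single_smul, diagonal_mulVec_single]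
    ext t
    simp only [Pi.smul_apply, mulVec_single, col_apply, smul_eq_mul,
      MulOpposite.smul_eq_mul_unop, MulOpposite.unop_op, diag_apply]
    ring
  obtain ⟨c, hc⟩ := LinearMap.exists_eq_smul_id_of_forall_notLinearIndependent
    (f := toLin' M) fun v hli => by
      obtain ⟨c, hc⟩ := heigen v (hli.ne_zero 0)
      have := (LinearIndependent.pair_iff.mp hli c (-1) (by simp [hc])).2
      norm_num at this
  exact hM c (by simpa using congrArg LinearMap.toMatrix' hc)

theorem commute_of_conj_eq {O₁ O₂ P : Matrix ι ι ℝ} (h₁ : O₁ᵀ * O₁ = 1) (h₂ : O₂ᵀ * O₂ = 1)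
    (h : O₁ * P * O₁ᵀ = O₂ * P * O₂ᵀ) : Commute (O₂ᵀ * O₁) P :=
  calc O₂ᵀ * O₁ * P = O₂ᵀ * (O₁ * P * O₁ᵀ) * O₁ := by simp only [mul_assoc, h₁, mul_one]
    _ = O₂ᵀ * (O₂ * P * O₂ᵀ) * O₁ := by rw [h]
    _ = P * (O₂ᵀ * O₁) := by simp only [← mul_assoc, h₂, one_mul]

theorem exists_inGrassmannian_conj_ne {k : ℕ} (hk : 1 ≤ k) (hkι : k < Fintype.card ι)
    {O₁ O₂ : Matrix ι ι ℝ} (h₁ : O₁ᵀ * O₁ = 1) (h₂ : O₂ᵀ * O₂ = 1)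
    (hO : ∀ c : ℝ, O₂ᵀ * O₁ ≠ c • 1) :
    ∃ P, InGrassmannian k P ∧ O₁ * P * O₁ᵀ ≠ O₂ * P * O₂ᵀ := by
  set M := O₂ᵀ * O₁
  obtain ⟨B, hB, hN⟩ := exists_orthogonal_not_isDiag hO
  obtain ⟨i, j, hij, hNij⟩ : ∃ i j, i ≠ j ∧ (Bᵀ * M * B) i j ≠ 0 := by
    simpa [IsDiag, Pairwise] using hN
  obtain ⟨S, hS, hScard⟩ := Finset.exists_subset_card_eq (s := Finset.univ \ {i, j}) (n := k - 1)
    (by rw [Finset.card_sdiff_of_subset (Finset.subset_univ _), Finset.card_pair hij,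
      Finset.card_univ]; omega)
  have hiS : i ∉ S := fun h => by simpa using hS h
  have hjS : j ∉ S := fun h => by simpa using hS h
  set D := diagonal fun t => if t ∈ insert j S then (1 : ℝ) else 0
  have hP : InGrassmannian k (B * D * Bᵀ) := by
    have := (inGrassmannian_diagonal (insert j S)).conj hB
    rwa [Finset.card_insert_of_notMem hjS, hScard, Nat.sub_add_cancel hk] at this
  refine ⟨B * D * Bᵀ, hP, fun hconj => hNij ?_⟩
  have hMP := (commute_of_conj_eq h₁ h₂ hconj).eq
  have hND : Bᵀ * M * B * D = D * (Bᵀ * M * B) :=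
    calc Bᵀ * M * B * D = Bᵀ * (M * (B * D * Bᵀ)) * B := by simp only [mul_assoc, hB, mul_one]
      _ = Bᵀ * (B * D * Bᵀ * M) * B := by rw [hMP]
      _ = D * (Bᵀ * M * B) := by simp only [← mul_assoc, hB, one_mul]
  simpa [D, mul_diagonal, diagonal_mul, hij, hiS] using congrFun (congrFun hND i) j

end Orthogonal

section Householder

variable {ι : Type*} [DecidableEq ι]

def householder (u : ι → ℝ) : Matrix ι ι ℝ :=
  1 - (2 : ℝ) • vecMulVec u u

theorem transpose_householder (u : ι → ℝ) : (householder u)ᵀ = householder u := by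
  rw [householder, transpose_sub, transpose_one, transpose_smul, transpose_vecMulVec]

variable [Fintype ι] {u v : ι → ℝ}

theorem householder_mul_self (hu : u ⬝ᵥ u = 1) : householder u * householder u = 1 := by
  have hsq : vecMulVec u u * vecMulVec u u = vecMulVec u u := by
    rw [vecMulVec_mul_vecMulVec, hu, one_smul]
  simp only [householder, sub_mul, mul_sub, one_mul, mul_one, smul_mul_smul_comm, hsq]
  module

theorem trace_householder (hu : u ⬝ᵥ u = 1) :
    (householder u).trace = Fintype.card ι - 2 := by
  simp [householder, trace_sub, trace_smul, trace_vecMulVec, hu]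

theorem householder_mul_householder_ne_smul_one (hu : u ⬝ᵥ u = 1) (hv : v ⬝ᵥ v = 1)
    (huv : vecMulVec u u ≠ vecMulVec v v) (hι : Fintype.card ι ≠ 2) (c : ℝ) :
    householder v * householder u ≠ c • 1 := by
  intro hc
  have hHu : householder u = c • householder v :=
    calc householder u = householder v * (householder v * householder u) := by
          rw [← mul_assoc, householder_mul_self hv, one_mul]
      _ = c • householder v := by rw [hc, mul_smul_comm, mul_one]
  have hc1 : c = 1 := by
    have htr := congrArg trace hHu
    rw [trace_smul, trace_householder hu, trace_householder hv, smul_eq_mul] at htr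
    have hι' : (Fintype.card ι : ℝ) - 2 ≠ 0 := sub_ne_zero.mpr (by exact_mod_cast hι)
    exact (mul_eq_right₀ hι').mp htr.symm
  rw [hc1, one_smul, householder, householder, sub_right_inj] at hHu
  exact huv (smul_right_injective _ two_ne_zero hHu)

end Householder

section PolynomialMaps

def polyFunctions (N : ℕ) : Subalgebra ℝ ((Fin N → ℝ) → ℝ) :=
  (aeval fun i (x : Fin N → ℝ) => x i).range

variable {N : ℕ}

theorem aeval_coord_apply (p : MvPolynomial (Fin N) ℝ) (x : Fin N → ℝ) :
    aeval (fun i (x : Fin N → ℝ) => x i) p x = eval x p := by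
  have h : (Pi.evalAlgHom ℝ (fun _ => ℝ) x).comp (aeval fun i (x : Fin N → ℝ) => x i) = aeval x :=
    algHom_ext fun i => by simp
  rw [← coe_aeval_eq_eval, ← h]
  rfl

theorem mem_polyFunctions {f : (Fin N → ℝ) → ℝ} :
    f ∈ polyFunctions N ↔ ∃ p : MvPolynomial (Fin N) ℝ, ∀ x, f x = eval x p := by
  simp only [polyFunctions, AlgHom.mem_range, _root_.funext_iff, aeval_coord_apply, eq_comm]

theorem continuous_of_mem_polyFunctions {f : (Fin N → ℝ) → ℝ} (hf : f ∈ polyFunctions N) :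
    Continuous f := by
  obtain ⟨p, hp⟩ := mem_polyFunctions.mp hf
  simpa only [← funext hp] using continuous_eval p

theorem isPolyFun_iff {m : ℕ} {F : (Fin N → ℝ) → Fin m → ℝ} :
    IsPolyFun F ↔ ∀ j, (fun x => F x j) ∈ polyFunctions N := by
  simp only [IsPolyFun, mem_polyFunctions]

def IsPolyMatrix {l m : Type*} (A : (Fin N → ℝ) → Matrix l m ℝ) : Prop :=
  ∀ i j, (fun x => A x i j) ∈ polyFunctions N

variable {l m o : Type*}

theorem isPolyMatrix_const (A : Matrix l m ℝ) : IsPolyMatrix fun _ : Fin N → ℝ => A :=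
  fun i j => (polyFunctions N).algebraMap_mem (A i j)

theorem isPolyMatrix_vecMulVec {u : (Fin N → ℝ) → l → ℝ} {v : (Fin N → ℝ) → m → ℝ}
    (hu : ∀ i, (fun x => u x i) ∈ polyFunctions N) (hv : ∀ j, (fun x => v x j) ∈ polyFunctions N) :
    IsPolyMatrix fun x => vecMulVec (u x) (v x) :=
  fun i j => mul_mem (hu i) (hv j)

variable {A B : (Fin N → ℝ) → Matrix l m ℝ}

theorem IsPolyMatrix.sub (hA : IsPolyMatrix A) (hB : IsPolyMatrix B) :
    IsPolyMatrix fun x => A x - B x :=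
  fun i j => sub_mem (hA i j) (hB i j)

theorem IsPolyMatrix.smul (hA : IsPolyMatrix A) (c : ℝ) : IsPolyMatrix fun x => c • A x :=
  fun i j => Subalgebra.smul_mem _ (hA i j) c

theorem IsPolyMatrix.transpose (hA : IsPolyMatrix A) : IsPolyMatrix fun x => (A x)ᵀ :=
  fun i j => hA j i

theorem IsPolyMatrix.mul [Fintype m] {C : (Fin N → ℝ) → Matrix m o ℝ} (hA : IsPolyMatrix A)
    (hC : IsPolyMatrix C) : IsPolyMatrix fun x => A x * C x := fun i j => by
  have h := Subalgebra.sum_mem _ fun t (_ : t ∈ Finset.univ) => mul_mem (hA i t) (hC t j)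
  rwa [Finset.sum_fn] at h

end PolynomialMaps

section Sphere

variable {n m : ℕ}

theorem mem_sphereSet_iff {x : Fin (n + 1) → ℝ} : x ∈ sphereSet n ↔ x ⬝ᵥ x = 1 := by
  simp [sphereSet, dotProduct, sq]

theorem isPreconnected_sphereSet (hn : 1 ≤ n) : IsPreconnected (sphereSet n) := by
  have hrank : (1 : Cardinal) < Module.rank ℝ (EuclideanSpace ℝ (Fin (n + 1))) := by
    rw [← Module.finrank_eq_rank, finrank_euclideanSpace_fin]
    exact_mod_cast (by omega : 1 < n + 1)
  have himage :
      sphereSet n = WithLp.ofLp '' Metric.sphere (0 : EuclideanSpace ℝ (Fin (n + 1))) 1 := by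
    rw [EuclideanSpace.sphere_zero_eq 1 zero_le_one, one_pow]
    ext x
    exact ⟨fun hx => ⟨WithLp.toLp 2 x, hx, rfl⟩, by rintro ⟨y, hy, rfl⟩; exact hy⟩
  rw [himage]
  exact ((isConnected_sphere hrank 0 zero_le_one).image _
    (PiLp.continuous_ofLp 2 _).continuousOn).isPreconnected

theorem existsNonconstPolyMap_self (n : ℕ) : ExistsNonconstPolyMap n n := by
  have hsingle : ∀ c : ℝ, c ^ 2 = 1 → Pi.single 0 c ∈ sphereSet n := fun c hc => by
    simp [sphereSet, Pi.single_apply, hc]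
  refine ⟨id, ⟨isPolyFun_iff.mpr fun j => mem_polyFunctions.mpr ⟨X j, fun x => by simp⟩,
    fun x hx => hx⟩, _, hsingle 1 (by norm_num), _, hsingle (-1) (by norm_num), fun h => ?_⟩
  have h0 := congrFun h 0
  norm_num at h0

theorem ExistsNonconstPolyMap.mono {Q : ℕ} (h : ExistsNonconstPolyMap n Q) (hQm : Q ≤ m) :
    ExistsNonconstPolyMap n m := by
  obtain ⟨f, ⟨hf, hfsph⟩, a, ha, b, hb, hab⟩ := h
  set e : Fin (Q + 1) → Fin (m + 1) := Fin.castLE (by omega)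
  have he : e.Injective := Fin.castLE_injective _
  have hext : ∀ x i, e.extend (f x) 0 (e i) = f x i := fun x i => he.extend_apply _ _ _
  refine ⟨fun x => e.extend (f x) 0, ⟨fun j => ?_, fun x hx => ?_⟩, a, ha, b, hb,
    fun h => hab (funext fun i => by simpa [hext] using congrFun h (e i))⟩
  · by_cases hj : ∃ i, e i = j
    · obtain ⟨i, rfl⟩ := hj
      obtain ⟨p, hp⟩ := hf i
      exact ⟨p, fun x => by simp only [hext, hp]⟩
    · exact ⟨0, fun x => by simp [Function.extend_apply' _ _ _ hj]⟩
  · rw [sphereSet, Set.mem_ofPred_eq, ← hfsph x hx]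
    refine (Fintype.sum_of_injective e he _ _ (fun j hj => ?_) fun i => by simp only [hext]).symm
    simp [Function.extend_apply' _ _ _ hj]

theorem nonconstOn_vecMulVec (hn : 1 ≤ n) {g : (Fin (n + 1) → ℝ) → Fin (m + 1) → ℝ}
    (hg : IsSpherePolyMap n m g) (hnc : NonconstOn (sphereSet n) g) :
    NonconstOn (sphereSet n) fun x => vecMulVec (g x) (g x) := by
  obtain ⟨a, ha, b, hb, hab⟩ := hnc
  by_contra hconst
  simp only [NonconstOn, not_exists, not_and, not_not] at hconst
  have hunit : ∀ x ∈ sphereSet n, g x ⬝ᵥ g x = 1 := fun x hx => mem_sphereSet_iff.mp (hg.2 x hx)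
  set ε : (Fin (n + 1) → ℝ) → ℝ := fun x => g a ⬝ᵥ g x
  have hg_eq : ∀ x ∈ sphereSet n, g x = ε x • g a := fun x hx =>
    calc g x = vecMulVec (g x) (g x) *ᵥ g x := by simp [vecMulVec_mulVec, hunit x hx]
      _ = vecMulVec (g a) (g a) *ᵥ g x := by rw [hconst x hx a ha]
      _ = ε x • g a := by simp [vecMulVec_mulVec, ε]
  have hε_sq : ∀ x ∈ sphereSet n, ε x ^ 2 = 1 := fun x hx => by
    have h := hunit x hx
    rwa [hg_eq x hx, dotProduct_smul, smul_dotProduct, hunit a ha, smul_eq_mul, smul_eq_mul,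
      mul_one, ← sq] at h
  have hεa : ε a = 1 := hunit a ha
  have hεb : ε b = -1 := (sq_eq_one_iff.mp (hε_sq b hb)).resolve_left fun h =>
    hab (by rw [hg_eq b hb, h, one_smul])
  have hcont : ContinuousOn ε (sphereSet n) :=
    (continuous_finsetSum _ fun i _ => continuous_const.mul
      (continuous_of_mem_polyFunctions (isPolyFun_iff.mp hg.1 i))).continuousOn
  obtain ⟨x, hx, hx0⟩ := (isPreconnected_sphereSet hn).intermediate_value hb ha hcont
    (show (0 : ℝ) ∈ Set.Icc (ε b) (ε a) by rw [hεa, hεb]; norm_num)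
  simpa [hx0] using hε_sq x hx

end Sphere

section GrassmannianMaps

variable {n k : ℕ}

theorem ExistsNonconstPolyMapGrR.of_existsNonconstPolyMap {m : ℕ} (hn : 1 ≤ n) (hk : 1 ≤ k)
    (hkm : k ≤ m) (h : ExistsNonconstPolyMap n m) : ExistsNonconstPolyMapGrR n k (m + 1) := by
  obtain ⟨g, hg, hgnc⟩ := h
  have hgpoly := isPolyFun_iff.mp hg.1
  have hunit : ∀ x ∈ sphereSet n, g x ⬝ᵥ g x = 1 := fun x hx => mem_sphereSet_iff.mp (hg.2 x hx)
  obtain ⟨a, ha, b, hb, hab⟩ := nonconstOn_vecMulVec hn hg hgnc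
  have hH : IsPolyMatrix fun x => householder (g x) :=
    (isPolyMatrix_const 1).sub ((isPolyMatrix_vecMulVec hgpoly hgpoly).smul 2)
  have hHH : ∀ x ∈ sphereSet n, (householder (g x))ᵀ * householder (g x) = 1 := fun x hx => by
    rw [transpose_householder, householder_mul_self (hunit x hx)]
  rcases hk.eq_or_lt with rfl | hk
  · exact ⟨fun x => vecMulVec (g x) (g x),
      fun i j => mem_polyFunctions.mp (isPolyMatrix_vecMulVec hgpoly hgpoly i j),
      fun x hx => inGrassmannian_vecMulVec (hunit x hx), a, ha, b, hb, hab⟩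
  · obtain ⟨P₀, hP₀, hne⟩ := exists_inGrassmannian_conj_ne (by omega)
      (by rw [Fintype.card_fin]; omega) (hHH a ha) (hHH b hb) fun c => by
        rw [transpose_householder]
        exact householder_mul_householder_ne_smul_one (hunit a ha) (hunit b hb) hab
          (by rw [Fintype.card_fin]; omega) c
    exact ⟨fun x => householder (g x) * P₀ * (householder (g x))ᵀ,
      fun i j => mem_polyFunctions.mp ((hH.mul (isPolyMatrix_const P₀)).mul hH.transpose i j),
      fun x hx => hP₀.conj (hHH x hx), a, ha, b, hb, hne⟩

theorem ExistsNonconstPolyMapGrR.lt {r : ℕ} (h : ExistsNonconstPolyMapGrR n k r) : k < r := by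
  obtain ⟨P, -, hP, x, hx, y, hy, hxy⟩ := h
  have hkr : k ≤ r := by simpa [(hP x hx).2.2] using rank_le_card_width (P x)
  refine hkr.lt_of_ne fun hkr => hxy ?_
  subst hkr
  have hfull : ∀ v ∈ sphereSet n, InGrassmannian (Fintype.card (Fin k)) (P v) := fun v hv => by
    rw [Fintype.card_fin]
    exact hP v hv
  rw [(hfull x hx).eq_one, (hfull y hy).eq_one]

theorem col_two_smul_sub_one_dotProduct_self {ι : Type*} [Fintype ι] [DecidableEq ι]
    {P : Matrix ι ι ℝ} (hsymm : Pᵀ = P) (hidem : P * P = P) (j : ι) :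
    ((2 : ℝ) • P - 1).col j ⬝ᵥ ((2 : ℝ) • P - 1).col j = 1 := by
  have hS : ((2 : ℝ) • P - 1)ᵀ * ((2 : ℝ) • P - 1) = 1 := by
    rw [transpose_sub, transpose_smul, transpose_one, hsymm]
    simp only [sub_mul, mul_sub, one_mul, mul_one, smul_mul_smul_comm, hidem]
    module
  have hjj := congrFun (congrFun hS j) j
  rwa [mul_apply', one_apply_eq] at hjj

theorem ExistsNonconstPolyMapGrR.existsNonconstPolyMap {s : ℕ}
    (h : ExistsNonconstPolyMapGrR n k (s + 1)) : ExistsNonconstPolyMap n s := by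
  obtain ⟨P, hpoly, hP, x, hx, y, hy, hxy⟩ := h
  obtain ⟨i, j, hij⟩ : ∃ i j, P x i j ≠ P y i j := by
    by_contra! hall
    exact hxy (Matrix.ext hall)
  have hPpoly : IsPolyMatrix P := fun i j => mem_polyFunctions.mpr (hpoly i j)
  have hS : IsPolyMatrix fun v => (2 : ℝ) • P v - 1 := (hPpoly.smul 2).sub (isPolyMatrix_const 1)
  refine ⟨fun v => ((2 : ℝ) • P v - 1).col j,
    ⟨isPolyFun_iff.mpr fun t => hS t j, fun v hv => mem_sphereSet_iff.mpr ?_⟩, x, hx, y, hy,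
    fun h => hij ?_⟩
  · exact col_two_smul_sub_one_dotProduct_self (hP v hv).1 (hP v hv).2.1 j
  · simpa using congrFun h i

end GrassmannianMaps

/-- For all `n ≥ 2` and `k ≥ 1`, `q_{Gr_ℝ(k,•)}(n) = 1 + max(k, q(n))`. -/
theorem qGrR_eq (n k : ℕ) (hn : 2 ≤ n) (hk : 1 ≤ k) : qGrR k n = 1 + max k (q n) := by
  have hq : q n ∈ {r | 1 ≤ r ∧ ExistsNonconstPolyMap n r} :=
    Nat.sInf_mem ⟨n, by omega, existsNonconstPolyMap_self n⟩
  have hmax : ExistsNonconstPolyMapGrR n k (1 + max k (q n)) := by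
    rw [add_comm]
    exact .of_existsNonconstPolyMap (by omega) hk (le_max_left _ _)
      (hq.2.mono (le_max_right _ _))
  refine le_antisymm (Nat.sInf_le ⟨by omega, hmax⟩) (le_csInf ⟨1 + max k (q n), by omega, hmax⟩ ?_)
  rintro r ⟨-, hr⟩
  obtain ⟨s, rfl⟩ : ∃ s, r = s + 1 := ⟨r - 1, by have := hr.lt; omega⟩
  have hks : k ≤ s := Nat.lt_succ_iff.mp hr.lt
  have hqs : q n ≤ s := Nat.sInf_le ⟨by omega, hr.existsNonconstPolyMap⟩
  omega
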